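/- The abelianization of the group G = ⟨a, b | a b a b^{-1} a^{-1} b a b = b a b a^{-1} b^{-1} a b a, (b a b^{-1} a^{-1} b^{-1} a b a^{-1})^n a^m = 1⟩ is isomorphic to ℤ ⊕ ℤ/mℤ, with the image of a generating the ℤ/mℤ summand; in particular, if m ≥ 2 then a ≠ 1 in G. -/

import Mathlib

/-!
In any abelian quotient the first relator dies, since both of its sides have the same exponent
sums, and the second one becomes `a ^ m`, since the bracketed word has exponent sum zero in each
generator. Hence the abelianization is `⟨a, b | [a, b], a ^ m⟩ ≅ ℤ × ℤ/m`, the isomorphism being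
given by the exponent sums (of `b` in `ℤ`, of `a` modulo `m`). As `a` maps to `(0, 1)`, it is
nontrivial as soon as `m ≠ 1`.
-/

/-- The two relators of
⟨a, b | a b a b⁻¹ a⁻¹ b a b = b a b a⁻¹ b⁻¹ a b a, (b a b⁻¹ a⁻¹ b⁻¹ a b a⁻¹)ⁿ aᵐ = 1⟩,
with `a = FreeGroup.of 0`, `b = FreeGroup.of 1`. -/
def whiteheadRels (m n : ℕ) : Set (FreeGroup (Fin 2)) :=
  let a : FreeGroup (Fin 2) := FreeGroup.of 0
  let b : FreeGroup (Fin 2) := FreeGroup.of 1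
  { (a * b * a * b⁻¹ * a⁻¹ * b * a * b) * (b * a * b * a⁻¹ * b⁻¹ * a * b * a)⁻¹,
    (b * a * b⁻¹ * a⁻¹ * b⁻¹ * a * b * a⁻¹) ^ n * a ^ m }

theorem ZMod.zmultiples_one (m : ℕ) : AddSubgroup.zmultiples (1 : ZMod m) = ⊤ :=
  eq_top_iff.2 fun x _ => by
    obtain ⟨j, rfl⟩ := ZMod.intCast_surjective x
    exact AddSubgroup.intCast_mem_zmultiples_one j

open Multiplicative

namespace WhiteheadFilling

theorem map_whiteheadRels_eq_one_iff {C : Type*} [CommGroup C] (m n : ℕ)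
    (f : FreeGroup (Fin 2) →* C) :
    (∀ r ∈ whiteheadRels m n, f r = 1) ↔ f (FreeGroup.of 0) ^ m = 1 := by
  set a := f (FreeGroup.of 0)
  set b := f (FreeGroup.of 1)
  have hfirst : a * b * a * b⁻¹ * a⁻¹ * b * a * b = b * a * b * a⁻¹ * b⁻¹ * a * b * a := by
    simp only [mul_comm, mul_left_comm, mul_assoc]
  simp [whiteheadRels, a, b, hfirst]

variable (m n : ℕ)

abbrev Ab : Type := Abelianization (PresentedGroup (whiteheadRels m n))

abbrev genA : Ab m n := Abelianization.of (PresentedGroup.of 0)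

abbrev genB : Ab m n := Abelianization.of (PresentedGroup.of 1)

theorem genA_pow_eq_one : genA m n ^ m = 1 :=
  (map_whiteheadRels_eq_one_iff m n (Abelianization.of.comp (PresentedGroup.mk _))).1
    fun r hr => by simp [PresentedGroup.one_of_mem hr]

def exponentSums : Fin 2 → Multiplicative (ℤ × ZMod m) := ![ofAdd (0, 1), ofAdd (1, 0)]

theorem lift_exponentSums_eq_one :
    ∀ r ∈ whiteheadRels m n, FreeGroup.lift (exponentSums m) r = 1 :=
  (map_whiteheadRels_eq_one_iff m n _).2 <| by simp [exponentSums, ← ofAdd_nsmul]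

def toProd : Ab m n →* Multiplicative (ℤ × ZMod m) :=
  Abelianization.lift (PresentedGroup.toGroup (lift_exponentSums_eq_one m n))

@[simp] theorem toProd_genA : toProd m n (genA m n) = ofAdd (0, 1) := by
  simp [toProd, exponentSums]

@[simp] theorem toProd_genB : toProd m n (genB m n) = ofAdd (1, 0) := by
  simp [toProd, exponentSums]

def ofProd : Multiplicative (ℤ × ZMod m) →* Ab m n :=
  AddMonoidHom.toMultiplicativeLeft <|
    (zmultiplesHom _ (Additive.ofMul (genB m n))).coprod
      (ZMod.lift m ⟨zmultiplesHom _ (Additive.ofMul (genA m n)), by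
        simp [← ofMul_pow, genA_pow_eq_one]⟩)

@[simp] theorem ofProd_ofAdd (k j : ℤ) :
    ofProd m n (ofAdd (k, j)) = genB m n ^ k * genA m n ^ j := by
  simp [ofProd]

theorem ofProd_comp_toProd : (ofProd m n).comp (toProd m n) = MonoidHom.id _ := by
  refine Abelianization.hom_ext _ _ (PresentedGroup.ext fun i => ?_)
  fin_cases i
  · simpa using ofProd_ofAdd m n 0 1
  · simpa using ofProd_ofAdd m n 1 0

theorem toProd_comp_ofProd : (toProd m n).comp (ofProd m n) = MonoidHom.id _ := by
  refine MonoidHom.ext fun z => ?_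
  obtain ⟨⟨k, x⟩, rfl⟩ := ofAdd.surjective z
  obtain ⟨j, rfl⟩ := ZMod.intCast_surjective x
  simp [← ofAdd_zsmul, ← ofAdd_add]

def abelianizationEquiv : Ab m n ≃* Multiplicative (ℤ × ZMod m) :=
  (toProd m n).toMulEquiv (ofProd m n) (ofProd_comp_toProd m n) (toProd_comp_ofProd m n)

theorem abelianizationEquiv_genA : abelianizationEquiv m n (genA m n) = ofAdd (0, 1) :=
  toProd_genA m n

theorem of_zero_ne_one (hm : m ≠ 1) :
    (PresentedGroup.of 0 : PresentedGroup (whiteheadRels m n)) ≠ 1 := by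
  have : Nontrivial (ZMod m) := ZMod.nontrivial_iff.2 hm
  intro h
  have := congrArg (fun g => (toAdd (abelianizationEquiv m n (Abelianization.of g))).2) h
  simp [abelianizationEquiv_genA] at this

end WhiteheadFilling

open WhiteheadFilling in
theorem whitehead_filling_abelianization_general (m n : ℕ) (hm : 2 ≤ m) :
    (∃ φ : Abelianization (PresentedGroup (whiteheadRels m n)) ≃*
        Multiplicative (ℤ × ZMod m),
      (Multiplicative.toAdd
        (φ (Abelianization.of (PresentedGroup.of 0)))).1 = 0 ∧
      AddSubgroup.zmultiples (Multiplicative.toAdd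
        (φ (Abelianization.of (PresentedGroup.of 0)))).2 = ⊤) ∧
    (PresentedGroup.of 0 : PresentedGroup (whiteheadRels m n)) ≠ 1 := by
  have h_a := abelianizationEquiv_genA m n
  exact ⟨⟨abelianizationEquiv m n, by rw [h_a]; rfl, by rw [h_a]; exact ZMod.zmultiples_one m⟩,
    of_zero_ne_one m n (by omega)⟩

/-- The abelianization of G is ℤ ⊕ ℤ/m, with the class of a mapping to a generator of
the ℤ/m summand (and trivial ℤ-coordinate); in particular a ≠ 1 in G when m ≥ 2. -/
theorem whitehead_filling_abelianization (m n : ℕ) (hm : 2 ≤ m) (hn : 1 ≤ n) :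
    (∃ φ : Abelianization (PresentedGroup (whiteheadRels m n)) ≃*
        Multiplicative (ℤ × ZMod m),
      (Multiplicative.toAdd
        (φ (Abelianization.of (PresentedGroup.of 0)))).1 = 0 ∧
      AddSubgroup.zmultiples (Multiplicative.toAdd
        (φ (Abelianization.of (PresentedGroup.of 0)))).2 = ⊤) ∧
    (PresentedGroup.of 0 : PresentedGroup (whiteheadRels m n)) ≠ 1 :=
  whitehead_filling_abelianization_general m n hm
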